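/- Let f(t) = Σ_{m=0}^∞ φ(2^m t)/(m+1)² for t ∈ [0,1], where φ is the tent map. Then f has exactly two global maximizers on [0,1], located at t = 11/24 and t = 13/24. -/

import Mathlib

open MeasureTheory Filter Set

/-- The tent map: distance to the nearest integer. -/
noncomputable def phi (t : ℝ) : ℝ := ⨅ z : ℤ, |t - (z : ℝ)|

/-- A function in the Takagi class, for coefficient sequence `c`. -/
noncomputable def takagiF (c : ℕ → ℝ) (t : ℝ) : ℝ := ∑' m : ℕ, c m * phi (2 ^ m * t)

/-- `T(ρ) = Σ 2^{-(n+2)} (1 - ρ n)`. -/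
noncomputable def Trho (ρ : ℕ → ℝ) : ℝ := ∑' n : ℕ, (1 - ρ n) / 2 ^ (n + 2)

/-- A `{-1,+1}`-valued sequence. -/
def IsSign (ρ : ℕ → ℝ) : Prop := ∀ n, ρ n = 1 ∨ ρ n = -1

/-- `ρ` is a Rademacher expansion of `t`. -/
def IsRademacherExp (ρ : ℕ → ℝ) (t : ℝ) : Prop := IsSign ρ ∧ Trho ρ = t

/-- The step condition for coefficients `c`. -/
def StepCond (c : ℕ → ℝ) (ρ : ℕ → ℝ) : Prop :=
  ∀ n : ℕ, 1 ≤ n → ρ n * ∑ m ∈ Finset.range n, 2 ^ m * c m * ρ m ≤ 0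

noncomputable def sharpAux (c : ℕ → ℝ) : ℕ → ℝ × ℝ
  | 0 => (1, c 0)
  | n + 1 =>
    let S := (sharpAux c n).2
    let r : ℝ := if S ≤ 0 then 1 else -1
    (r, S + 2 ^ (n + 1) * c (n + 1) * r)

/-- The sequence `ρ♯` for coefficients `c`. -/
noncomputable def rhoSharp (c : ℕ → ℝ) (n : ℕ) : ℝ := (sharpAux c n).1

noncomputable def flatAux (c : ℕ → ℝ) : ℕ → ℝ × ℝ
  | 0 => (1, c 0)
  | n + 1 =>
    let S := (flatAux c n).2
    let r : ℝ := if S < 0 then 1 else -1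
    (r, S + 2 ^ (n + 1) * c (n + 1) * r)

/-- The sequence `ρ♭` for coefficients `c`. -/
noncomputable def rhoFlat (c : ℕ → ℝ) (n : ℕ) : ℝ := (flatAux c n).1

/-- The Takagi–Landsberg function with parameter `α`. -/
noncomputable def fTL (α : ℝ) (t : ℝ) : ℝ := ∑' m : ℕ, α ^ m / 2 ^ m * phi (2 ^ m * t)

noncomputable def sharpAuxTL (α : ℝ) : ℕ → ℝ × ℝ
  | 0 => (1, 1)
  | n + 1 =>
    let S := (sharpAuxTL α n).2
    let r : ℝ := if S ≤ 0 then 1 else -1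
    (r, S + α ^ (n + 1) * r)

/-- The sequence `ρ♯(α)` for the Takagi–Landsberg function. -/
noncomputable def rhoSharpTL (α : ℝ) (n : ℕ) : ℝ := (sharpAuxTL α n).1

noncomputable def flatAuxTL (α : ℝ) : ℕ → ℝ × ℝ
  | 0 => (1, 1)
  | n + 1 =>
    let S := (flatAuxTL α n).2
    let r : ℝ := if S < 0 then 1 else -1
    (r, S + α ^ (n + 1) * r)

/-- The sequence `ρ♭(α)` for the Takagi–Landsberg function. -/
noncomputable def rhoFlatTL (α : ℝ) (n : ℕ) : ℝ := (flatAuxTL α n).1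

/-- `τ♯(α) = T(ρ♯(α))`. -/
noncomputable def tauSharp (α : ℝ) : ℝ := Trho (rhoSharpTL α)

/-- `τ♭(α) = T(ρ♭(α))`. -/
noncomputable def tauFlat (α : ℝ) : ℝ := Trho (rhoFlatTL α)

/-- The Littlewood polynomial `p_{2n}(x) = 1 - x - x² - ⋯ - x^{2n}`. -/
noncomputable def p2n (n : ℕ) (x : ℝ) : ℝ := 1 - ∑ m ∈ Finset.Icc 1 (2 * n), x ^ m

/-!
Write `f(t) = φ(t) + φ(2t)/4 + φ(4t)/9 + g(8t)` with `g = takagiF q`, `q m = 1/(m+4)²`.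
Choosing weights `w` with `q j = w j + w (j-1) / 2` and summing the identity
`φ(x) + φ(2x)/2 + ψ(x) = 1/2` (which defines `ψ = tentDefect ≥ 0`) against them gives
`g(y) = (∑ q)/3 - ∑ w j ψ(2^j y)`. Iterating `e(x) ≤ ψ(x) + e(2x)/2` (`e = distThirds`)
shows `∑ 2^{-j} ψ(2^j y) ≥ e(y)`; as `w j ≥ 2^{-j}/100`, this yields
`g(y) ≤ (∑ q)/3 - e(y)/100`, with equality on `±1/3 + ℤ`, which doubling preserves.
On `[0, 1/2]` the piecewise linear bound `φ(t) + φ(2t)/4 + φ(4t)/9 - e(8t)/100` is maximal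
only at `t = 11/24`, where `8t = 11/3`, so equality holds; the symmetry `f(1 - t) = f(t)`
gives `13/24`.
-/

lemma Function.Even.forall_of_forall_Icc {α : Type*} {F : ℝ → α} (he : F.Even)
    (hp : F.Periodic 1) {P : α → Prop} (h : ∀ y ∈ Icc (0 : ℝ) (1 / 2), P (F y)) (x : ℝ) :
    P (F x) := by
  have hF : F |x - round x| = F x := by
    rcases abs_choice (x - round x) with h | h <;> rw [h]
    · simpa using hp.sub_int_mul_eq (round x)
    · rw [he]; simpa using hp.sub_int_mul_eq (round x)
  exact hF ▸ h _ ⟨abs_nonneg _, abs_sub_round x⟩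

lemma phi_le_abs_sub (x : ℝ) (n : ℤ) : phi x ≤ |x - n| :=
  ciInf_le ⟨0, by rintro _ ⟨z, rfl⟩; positivity⟩ n

lemma phi_le_of_le {x a : ℝ} (n : ℤ) (h₁ : x - n ≤ a) (h₂ : n - x ≤ a) : phi x ≤ a :=
  (phi_le_abs_sub x n).trans (abs_sub_le_iff.2 ⟨h₁, h₂⟩)

lemma le_phi_of_le {x a : ℝ} (n : ℤ) (h₁ : a ≤ x - n) (h₂ : a ≤ n + 1 - x) : a ≤ phi x := by
  refine le_ciInf fun z => ?_
  rcases le_or_gt z n with hz | hz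
  · have : (z : ℝ) ≤ n := by exact_mod_cast hz
    exact h₁.trans ((by linarith : x - n ≤ x - z).trans (le_abs_self _))
  · have : (n : ℝ) + 1 ≤ z := by exact_mod_cast hz
    exact h₂.trans ((by linarith : n + 1 - x ≤ -(x - z)).trans (neg_le_abs _))

lemma phi_nonneg (x : ℝ) : 0 ≤ phi x := le_ciInf fun _ => abs_nonneg _

lemma phi_le_half (x : ℝ) : phi x ≤ 1 / 2 := (phi_le_abs_sub x (round x)).trans (abs_sub_round x)

lemma phi_neg (x : ℝ) : phi (-x) = phi x := by
  unfold phi iInf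
  rw [← (Equiv.neg ℤ).surjective.range_comp]
  congr 2 with z
  simp [← abs_neg (-x - _)]
  ring_nf

lemma phi_add_intCast (x : ℝ) (n : ℤ) : phi (x + n) = phi x := by
  unfold phi iInf
  rw [← (Equiv.addRight n).surjective.range_comp]
  congr 2 with z
  simp

lemma phi_periodic : Function.Periodic phi 1 := fun x => by
  simpa using phi_add_intCast x 1

lemma phi_intCast_div_three {k : ℤ} (hk : ¬ 3 ∣ k) : phi (k / 3) = 1 / 3 := by
  obtain ⟨n, rfl | rfl⟩ : ∃ n : ℤ, k = 3 * n + 1 ∨ k = 3 * n + 2 := ⟨k / 3, by omega⟩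
  · refine le_antisymm (phi_le_of_le n ?_ ?_) (le_phi_of_le n ?_ ?_) <;> push_cast <;> linarith
  · refine le_antisymm (phi_le_of_le (n + 1) ?_ ?_) (le_phi_of_le n ?_ ?_) <;> push_cast <;>
      linarith

lemma phi_two_pow_mul_intCast_div_three {k : ℤ} (hk : ¬ 3 ∣ k) (m : ℕ) :
    phi (2 ^ m * (k / 3)) = 1 / 3 := by
  have h3 : ¬ 3 ∣ 2 ^ m * k := fun h =>
    (Int.prime_three.dvd_or_dvd h).elim
      (fun h => by have := Int.prime_three.dvd_of_dvd_pow h; omega) hk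
  simpa [mul_div_assoc] using phi_intCast_div_three h3

noncomputable def tentDefect (x : ℝ) : ℝ := 1 / 2 - phi x - phi (2 * x) / 2

/-- The distance from `x` to `{1/3, 2/3} + ℤ`. -/
noncomputable def distThirds (x : ℝ) : ℝ := min (phi (x - 1 / 3)) (phi (x + 1 / 3))

lemma tentDefect_even : Function.Even tentDefect := fun x => by
  simp only [tentDefect, mul_neg, phi_neg]

lemma distThirds_even : Function.Even distThirds := fun x => by
  rw [distThirds, distThirds, show -x - 1 / 3 = -(x + 1 / 3) by ring,
    show -x + 1 / 3 = -(x - 1 / 3) by ring, phi_neg, phi_neg, min_comm]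

lemma tentDefect_periodic : Function.Periodic tentDefect 1 := fun x => by
  rw [tentDefect, tentDefect, phi_periodic x,
    show 2 * (x + 1) = 2 * x + (2 : ℤ) by push_cast; ring, phi_add_intCast]

lemma distThirds_periodic : Function.Periodic distThirds 1 := fun x => by
  rw [distThirds, distThirds, show x + 1 - 1 / 3 = x - 1 / 3 + 1 by ring,
    show x + 1 + 1 / 3 = x + 1 / 3 + 1 by ring, phi_periodic, phi_periodic]

lemma tentDefect_nonneg (x : ℝ) : 0 ≤ tentDefect x := by
  refine tentDefect_even.forall_of_forall_Icc tentDefect_periodic (P := (0 ≤ ·)) ?_ x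
  rintro y ⟨hy₀, hy₁⟩
  have h₁ : phi y ≤ y := phi_le_of_le 0 (by push_cast; linarith) (by push_cast; linarith)
  have h₂ : phi (2 * y) ≤ 1 - 2 * y :=
    phi_le_of_le 1 (by push_cast; linarith) (by push_cast; linarith)
  simp only [tentDefect]
  linarith

lemma tentDefect_le_half (x : ℝ) : tentDefect x ≤ 1 / 2 := by
  simp only [tentDefect]
  linarith [phi_nonneg x, phi_nonneg (2 * x)]

lemma distThirds_nonneg (x : ℝ) : 0 ≤ distThirds x := le_min (phi_nonneg _) (phi_nonneg _)

lemma distThirds_le_half (x : ℝ) : distThirds x ≤ 1 / 2 :=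
  (min_le_left _ _).trans (phi_le_half _)

lemma le_distThirds {x a : ℝ} (m n : ℤ) (h₁ : a ≤ x - 1 / 3 - m)
    (h₂ : a ≤ m + 1 - (x - 1 / 3)) (h₃ : a ≤ x + 1 / 3 - n) (h₄ : a ≤ n + 1 - (x + 1 / 3)) :
    a ≤ distThirds x :=
  le_min (le_phi_of_le m h₁ h₂) (le_phi_of_le n h₃ h₄)

lemma distThirds_le_tentDefect_add (x : ℝ) :
    distThirds x ≤ tentDefect x + distThirds (2 * x) / 2 := by
  suffices 0 ≤ tentDefect x + distThirds (2 * x) / 2 - distThirds x by linarith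
  refine Function.Even.forall_of_forall_Icc
    (F := fun x => tentDefect x + distThirds (2 * x) / 2 - distThirds x) (P := (0 ≤ ·))
    (fun x => by
      simp only [tentDefect_even x, mul_neg, distThirds_even x, distThirds_even (2 * x)])
    (fun x => by
      simp only [tentDefect_periodic x, distThirds_periodic x]
      rw [show 2 * (x + 1) = 2 * x + (2 : ℕ) * 1 by push_cast; ring,
        distThirds_periodic.nat_mul 2]) ?_ x
  rintro y ⟨hy₀, hy₁⟩
  simp only [tentDefect]
  have h₁ : phi y ≤ y := phi_le_of_le 0 (by push_cast; linarith) (by push_cast; linarith)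
  rcases le_or_gt y (1 / 4) with hy | hy
  · have h₂ : phi (2 * y) ≤ 2 * y :=
      phi_le_of_le 0 (by push_cast; linarith) (by push_cast; linarith)
    have h₃ : distThirds y ≤ 1 / 3 - y :=
      (min_le_left _ _).trans (phi_le_of_le 0 (by push_cast; linarith) (by push_cast; linarith))
    have h₄ : 2 * y - 1 / 3 ≤ distThirds (2 * y) := le_distThirds 0 0
      (by push_cast; linarith) (by push_cast; linarith) (by push_cast; linarith)
      (by push_cast; linarith)
    linarith
  have h₂ : phi (2 * y) ≤ 1 - 2 * y :=
    phi_le_of_le 1 (by push_cast; linarith) (by push_cast; linarith)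
  rcases le_or_gt y (1 / 3) with hy' | hy'
  · have h₃ : distThirds y ≤ 1 / 3 - y :=
      (min_le_left _ _).trans (phi_le_of_le 0 (by push_cast; linarith) (by push_cast; linarith))
    have h₄ : 2 / 3 - 2 * y ≤ distThirds (2 * y) := le_distThirds 0 0
      (by push_cast; linarith) (by push_cast; linarith) (by push_cast; linarith)
      (by push_cast; linarith)
    linarith
  · have h₃ : distThirds y ≤ y - 1 / 3 :=
      (min_le_left _ _).trans (phi_le_of_le 0 (by push_cast; linarith) (by push_cast; linarith))
    have h₄ : 2 * y - 2 / 3 ≤ distThirds (2 * y) := le_distThirds 0 1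
      (by push_cast; linarith) (by push_cast; linarith) (by push_cast; linarith)
      (by push_cast; linarith)
    linarith

lemma summable_half_pow_mul_tentDefect (x : ℝ) :
    Summable fun j : ℕ => (1 / 2 : ℝ) ^ j * tentDefect (2 ^ j * x) :=
  (summable_geometric_two.mul_right (1 / 2)).of_nonneg_of_le
    (fun j => mul_nonneg (by positivity) (tentDefect_nonneg _))
    (fun j => mul_le_mul_of_nonneg_left (tentDefect_le_half _) (by positivity))

lemma distThirds_le_tsum (x : ℝ) :
    distThirds x ≤ ∑' j : ℕ, (1 / 2 : ℝ) ^ j * tentDefect (2 ^ j * x) := by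
  set u : ℕ → ℝ := fun j => (1 / 2 : ℝ) ^ j * distThirds (2 ^ j * x)
  have hstep (j : ℕ) : u j - u (j + 1) ≤ (1 / 2 : ℝ) ^ j * tentDefect (2 ^ j * x) :=
    calc u j - u (j + 1)
        = (1 / 2 : ℝ) ^ j * (distThirds (2 ^ j * x) - distThirds (2 * (2 ^ j * x)) / 2) := by
          simp only [u, show (2 : ℝ) ^ (j + 1) * x = 2 * (2 ^ j * x) by ring]; ring
      _ ≤ _ := mul_le_mul_of_nonneg_left
          (by linarith [distThirds_le_tentDefect_add (2 ^ j * x)]) (by positivity)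
  have hbound (N : ℕ) :
      distThirds x ≤ ∑' j : ℕ, (1 / 2 : ℝ) ^ j * tentDefect (2 ^ j * x) + (1 / 2 : ℝ) ^ N := by
    have htel := Finset.sum_le_sum fun j (_ : j ∈ Finset.range N) => hstep j
    rw [Finset.sum_range_sub'] at htel
    simp only [u, pow_zero, one_mul] at htel
    have hpartial := (summable_half_pow_mul_tentDefect x).sum_le_tsum (Finset.range N)
      fun j _ => mul_nonneg (by positivity) (tentDefect_nonneg _)
    have huN : u N ≤ (1 / 2 : ℝ) ^ N :=
      mul_le_of_le_one_right (by positivity) ((distThirds_le_half _).trans (by norm_num))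
    linarith
  refine ge_of_tendsto' (x := atTop) ?_ hbound
  simpa using tendsto_const_nhds.add
    (tendsto_pow_atTop_nhds_zero_of_lt_one (by norm_num : (0 : ℝ) ≤ 1 / 2) (by norm_num))

lemma summable_mul_phi {c : ℕ → ℝ} (hc : Summable c) (t : ℝ) :
    Summable fun m => c m * phi (2 ^ m * t) :=
  (hc.abs.mul_right (1 / 2)).of_norm_bounded fun m => by
    rw [norm_mul, Real.norm_eq_abs, Real.norm_of_nonneg (phi_nonneg _)]
    exact mul_le_mul_of_nonneg_left (phi_le_half _) (abs_nonneg _)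

lemma takagiF_eq_sum_add_takagiF {c : ℕ → ℝ} (hc : Summable c) (k : ℕ) (t : ℝ) :
    takagiF c t = ∑ m ∈ Finset.range k, c m * phi (2 ^ m * t) +
      takagiF (fun m => c (m + k)) (2 ^ k * t) := by
  rw [takagiF, ← (summable_mul_phi hc t).sum_add_tsum_nat_add k, takagiF]
  congr 2 with m
  rw [pow_add, mul_assoc]

lemma takagiF_one_sub (c : ℕ → ℝ) (t : ℝ) : takagiF c (1 - t) = takagiF c t := by
  refine tsum_congr fun m => ?_
  rw [show (2 : ℝ) ^ m * (1 - t) = -(2 ^ m * t) + ((2 ^ m : ℤ) : ℝ) by push_cast; ring,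
    phi_add_intCast, phi_neg]

lemma takagiF_intCast_div_three (c : ℕ → ℝ) {k : ℤ} (hk : ¬ 3 ∣ k) :
    takagiF c (k / 3) = (∑' m, c m) / 3 := by
  simp only [takagiF, phi_two_pow_mul_intCast_div_three hk, ← tsum_div_const]
  ring_nf

noncomputable def halfDeconv (q : ℕ → ℝ) : ℕ → ℝ
  | 0 => q 0
  | j + 1 => q (j + 1) - halfDeconv q j / 2

lemma hasSum_mul_of_halfDeconv {q a : ℕ → ℝ} {A B : ℝ}
    (hA : HasSum (fun j => halfDeconv q j * a j) A)
    (hB : HasSum (fun j => halfDeconv q j * a (j + 1)) B) :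
    HasSum (fun j => q j * a j) (A + B / 2) := by
  rw [← hasSum_nat_add_iff' 1]
  convert ((hasSum_nat_add_iff' 1).2 hA).add (hB.div_const 2) using 1
  · funext j
    simp only [halfDeconv]
    ring
  · simp only [Finset.range_one, Finset.sum_singleton, halfDeconv]
    ring

lemma halfDeconv_mem_Icc {q : ℕ → ℝ} (hq₀ : ∀ j, 0 ≤ q j) (hq : ∀ j, q j ≤ 2 * q (j + 1))
    (j : ℕ) : halfDeconv q j ∈ Icc 0 (q j) := by
  induction j with
  | zero => exact ⟨hq₀ 0, le_rfl⟩
  | succ j ih =>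
    simp only [halfDeconv, mem_Icc]
    constructor <;> linarith [ih.1, ih.2, hq j, hq₀ (j + 1)]

theorem takagiF_add_tsum_halfDeconv_mul_tentDefect {q : ℕ → ℝ} (hq₀ : ∀ j, 0 ≤ q j)
    (hq : ∀ j, q j ≤ 2 * q (j + 1)) (hs : Summable q) (y : ℝ) :
    takagiF q y + ∑' j, halfDeconv q j * tentDefect (2 ^ j * y) = (∑' j, q j) / 3 := by
  set w := halfDeconv q
  have hw : HasSum w (∑' j, w j) :=
    (hs.of_nonneg_of_le (fun j => (halfDeconv_mem_Icc hq₀ hq j).1)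
      (fun j => (halfDeconv_mem_Icc hq₀ hq j).2)).hasSum
  have hA := (summable_mul_phi hw.summable y).hasSum
  have hB : HasSum (fun j => w j * phi (2 ^ (j + 1) * y)) _ :=
    ((summable_mul_phi hw.summable (2 * y)).congr fun j => by ring_nf).hasSum
  have hψ : HasSum (fun j => w j * tentDefect (2 ^ j * y)) _ :=
    (((hw.div_const 2).sub hA).sub (hB.div_const 2)).congr_fun fun j => by
      simp only [tentDefect, show (2 : ℝ) ^ (j + 1) * y = 2 * (2 ^ j * y) by ring]
      ring
  have hq_sum : HasSum q (∑' j, w j + (∑' j, w j) / 2) := by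
    simpa using
      hasSum_mul_of_halfDeconv (a := fun _ => 1) (by simpa using hw) (by simpa using hw)
  rw [takagiF, (hasSum_mul_of_halfDeconv hA hB).tsum_eq, hψ.tsum_eq, hq_sum.tsum_eq]
  ring

lemma sq_add_four_le_two_pow (j : ℕ) : (j + 4) ^ 2 ≤ 25 * 2 ^ j := by
  induction j with
  | zero => norm_num
  | succ j ih =>
    calc (j + 1 + 4) ^ 2 ≤ 2 * (j + 4) ^ 2 := by ring_nf; omega
      _ ≤ 25 * 2 ^ (j + 1) := by rw [pow_succ 2 j]; omega

lemma summable_inv_sq_add_four : Summable fun m : ℕ => 1 / ((m : ℝ) + 4) ^ 2 := by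
  simpa [Nat.cast_add] using (summable_nat_add_iff 4).2
    (Real.summable_one_div_nat_pow.2 one_lt_two)

lemma inv_sq_add_four_le_succ (m : ℕ) :
    5 * (1 / ((m : ℝ) + 4) ^ 2) ≤ 8 * (1 / (((m + 1 : ℕ) : ℝ) + 4) ^ 2) := by
  rw [mul_one_div, mul_one_div, div_le_div_iff₀ (by positivity) (by positivity)]
  push_cast
  nlinarith [m.cast_nonneg (α := ℝ)]

lemma inv_sq_add_four_le_two_mul_succ (m : ℕ) :
    1 / ((m : ℝ) + 4) ^ 2 ≤ 2 * (1 / (((m + 1 : ℕ) : ℝ) + 4) ^ 2) := by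
  linarith [inv_sq_add_four_le_succ m, (by positivity : (0 : ℝ) ≤ 1 / ((m : ℝ) + 4) ^ 2)]

lemma halfDeconv_inv_sq_add_four_mem_Icc (j : ℕ) :
    halfDeconv (fun m : ℕ => 1 / ((m : ℝ) + 4) ^ 2) j ∈ Icc 0 (1 / ((j : ℝ) + 4) ^ 2) :=
  halfDeconv_mem_Icc (fun m => by positivity) inv_sq_add_four_le_two_mul_succ j

lemma halfDeconv_inv_sq_add_four_ge (j : ℕ) :
    1 / 100 * (1 / 2 : ℝ) ^ j ≤ halfDeconv (fun m : ℕ => 1 / ((m : ℝ) + 4) ^ 2) j := by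
  cases j with
  | zero => norm_num [halfDeconv]
  | succ j =>
    have hw := (halfDeconv_inv_sq_add_four_mem_Icc j).2
    have hq_succ := inv_sq_add_four_le_succ j
    have hpow : ((j : ℝ) + 4) ^ 2 ≤ 25 * 2 ^ j := by exact_mod_cast sq_add_four_le_two_pow j
    have hq_ge : 1 / 100 * (1 / 2 : ℝ) ^ (j + 1) ≤ 1 / ((j : ℝ) + 4) ^ 2 / 8 := by
      rw [div_div, show 1 / 100 * (1 / 2 : ℝ) ^ (j + 1) = 1 / (25 * 2 ^ j * 8) by
        rw [one_div_pow, pow_succ]; field_simp; ring]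
      exact one_div_le_one_div_of_le (by positivity) (by nlinarith)
    simp only [halfDeconv]
    linarith

theorem takagiF_inv_sq_add_four_le (y : ℝ) :
    takagiF (fun m : ℕ => 1 / ((m : ℝ) + 4) ^ 2) y
      ≤ (∑' m : ℕ, 1 / ((m : ℝ) + 4) ^ 2) / 3 - distThirds y / 100 := by
  set w := halfDeconv (fun m : ℕ => 1 / ((m : ℝ) + 4) ^ 2)
  have hid := takagiF_add_tsum_halfDeconv_mul_tentDefect (fun m => by positivity)
    inv_sq_add_four_le_two_mul_succ summable_inv_sq_add_four y
  have hw_le (j : ℕ) : w j * tentDefect (2 ^ j * y) ≤ 1 / ((j : ℝ) + 4) ^ 2 * (1 / 2) :=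
    mul_le_mul (halfDeconv_inv_sq_add_four_mem_Icc j).2 (tentDefect_le_half _)
      (tentDefect_nonneg _) (by positivity)
  have hw_summable : Summable fun j => w j * tentDefect (2 ^ j * y) :=
    (summable_inv_sq_add_four.mul_right _).of_nonneg_of_le
      (fun j => mul_nonneg (halfDeconv_inv_sq_add_four_mem_Icc j).1 (tentDefect_nonneg _)) hw_le
  have hcmp : distThirds y / 100 ≤ ∑' j, w j * tentDefect (2 ^ j * y) :=
    calc distThirds y / 100
        ≤ ∑' j : ℕ, 1 / 100 * ((1 / 2 : ℝ) ^ j * tentDefect (2 ^ j * y)) := by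
          rw [tsum_mul_left]; linarith [distThirds_le_tsum y]
      _ ≤ ∑' j, w j * tentDefect (2 ^ j * y) :=
          ((summable_half_pow_mul_tentDefect y).mul_left _).tsum_le_tsum (fun j => by
            rw [← mul_assoc]
            exact mul_le_mul_of_nonneg_right (halfDeconv_inv_sq_add_four_ge j)
              (tentDefect_nonneg _)) hw_summable
  linarith

lemma takagi_head_sub_distThirds_lt {t : ℝ} (h₀ : 0 ≤ t) (h₁ : t ≤ 1 / 2)
    (ht : t ≠ 11 / 24) :
    phi t + phi (2 * t) / 4 + phi (4 * t) / 9 - distThirds (8 * t) / 100 < 215 / 432 := by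
  have hd := distThirds_nonneg (8 * t)
  have hφ₁ : phi t ≤ t := phi_le_of_le 0 (by push_cast; linarith) (by push_cast; linarith)
  have hφ₄ : phi (4 * t) ≤ 1 / 2 := phi_le_half _
  rcases le_or_gt t (1 / 4) with h | h
  · have hφ₂ : phi (2 * t) ≤ 2 * t :=
      phi_le_of_le 0 (by push_cast; linarith) (by push_cast; linarith)
    linarith
  have hφ₂ : phi (2 * t) ≤ 1 - 2 * t :=
    phi_le_of_le 1 (by push_cast; linarith) (by push_cast; linarith)
  rcases le_or_gt t (3 / 8) with h' | h'
  · linarith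
  -- on `[3/8, 1/2]` the first three terms equal `t/18 + 17/36`, which is `215/432` at `11/24`
  have hφ₄ : phi (4 * t) ≤ 2 - 4 * t :=
    phi_le_of_le 2 (by push_cast; linarith) (by push_cast; linarith)
  rcases ht.lt_or_gt with ht | ht
  · linarith
  · have : 8 * t - 11 / 3 ≤ distThirds (8 * t) := le_distThirds 3 4
      (by push_cast; linarith) (by push_cast; linarith) (by push_cast; linarith)
      (by push_cast; linarith)
    linarith

lemma takagiF_inv_sq_eq (t : ℝ) :
    takagiF (fun m : ℕ => 1 / ((m : ℝ) + 1) ^ 2) t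
      = phi t + phi (2 * t) / 4 + phi (4 * t) / 9
        + takagiF (fun m : ℕ => 1 / ((m : ℝ) + 4) ^ 2) (8 * t) := by
  have hs : Summable fun m : ℕ => 1 / ((m : ℝ) + 1) ^ 2 := by
    simpa [Nat.cast_add] using (summable_nat_add_iff 1).2
      (Real.summable_one_div_nat_pow.2 one_lt_two)
  rw [takagiF_eq_sum_add_takagiF hs 3, show (fun m : ℕ => 1 / (((m + 3 : ℕ) : ℝ) + 1) ^ 2)
    = fun m : ℕ => 1 / ((m : ℝ) + 4) ^ 2 by ext m; push_cast; ring]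
  simp only [Finset.sum_range_succ, Finset.sum_range_zero]
  norm_num
  ring

lemma takagiF_inv_sq_eleven_div_twentyfour :
    takagiF (fun m : ℕ => 1 / ((m : ℝ) + 1) ^ 2) (11 / 24)
      = 215 / 432 + (∑' m : ℕ, 1 / ((m : ℝ) + 4) ^ 2) / 3 := by
  have h₁ : phi (11 / 24) = 11 / 24 := le_antisymm
    (phi_le_of_le 0 (by norm_num) (by norm_num)) (le_phi_of_le 0 (by norm_num) (by norm_num))
  have h₂ : phi (2 * (11 / 24)) = 1 / 12 := le_antisymm
    (phi_le_of_le 1 (by norm_num) (by norm_num)) (le_phi_of_le 0 (by norm_num) (by norm_num))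
  have h₄ : phi (4 * (11 / 24)) = 1 / 6 := le_antisymm
    (phi_le_of_le 2 (by norm_num) (by norm_num)) (le_phi_of_le 1 (by norm_num) (by norm_num))
  have h₈ := takagiF_intCast_div_three (fun m : ℕ => 1 / ((m : ℝ) + 4) ^ 2) (k := 11)
    (by norm_num)
  rw [takagiF_inv_sq_eq, h₁, h₂, h₄,
    show (8 : ℝ) * (11 / 24) = ((11 : ℤ) : ℝ) / 3 by norm_num, h₈]
  ring

lemma takagiF_inv_sq_lt_of_le_half {t : ℝ} (h₀ : 0 ≤ t) (h₁ : t ≤ 1 / 2)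
    (ht : t ≠ 11 / 24) :
    takagiF (fun m : ℕ => 1 / ((m : ℝ) + 1) ^ 2) t
      < takagiF (fun m : ℕ => 1 / ((m : ℝ) + 1) ^ 2) (11 / 24) := by
  rw [takagiF_inv_sq_eq, takagiF_inv_sq_eleven_div_twentyfour]
  linarith [takagiF_inv_sq_add_four_le (8 * t), takagi_head_sub_distThirds_lt h₀ h₁ ht]

lemma takagiF_inv_sq_lt {t : ℝ} (ht : t ∈ Icc (0 : ℝ) 1) (h₁₁ : t ≠ 11 / 24)
    (h₁₃ : t ≠ 13 / 24) :
    takagiF (fun m : ℕ => 1 / ((m : ℝ) + 1) ^ 2) t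
      < takagiF (fun m : ℕ => 1 / ((m : ℝ) + 1) ^ 2) (11 / 24) := by
  rcases le_or_gt t (1 / 2) with h | h
  · exact takagiF_inv_sq_lt_of_le_half ht.1 h h₁₁
  · rw [← takagiF_one_sub]
    exact takagiF_inv_sq_lt_of_le_half (by linarith [ht.2]) (by linarith)
      fun h' => h₁₃ (by linarith)

theorem takagi_squared_example_maximizers :
    {t : ℝ | t ∈ Set.Icc (0 : ℝ) 1
        ∧ ∀ s ∈ Set.Icc (0 : ℝ) 1,
            takagiF (fun m => 1 / ((m : ℝ) + 1) ^ 2) s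
              ≤ takagiF (fun m => 1 / ((m : ℝ) + 1) ^ 2) t}
      = {11 / 24, 13 / 24} := by
  set f := takagiF (fun m => 1 / ((m : ℝ) + 1) ^ 2)
  have h₁₃ : f (13 / 24) = f (11 / 24) := by
    rw [show (13 / 24 : ℝ) = 1 - 11 / 24 by norm_num]
    exact takagiF_one_sub _ _
  have hle (s : ℝ) (hs : s ∈ Icc (0 : ℝ) 1) : f s ≤ f (11 / 24) := by
    by_cases hs₁₁ : s = 11 / 24
    · rw [hs₁₁]
    by_cases hs₁₃ : s = 13 / 24
    · rw [hs₁₃, h₁₃]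
    exact (takagiF_inv_sq_lt hs hs₁₁ hs₁₃).le
  ext t
  constructor
  · rintro ⟨ht, htmax⟩
    by_contra! hne
    simp only [mem_insert_iff, mem_singleton_iff, not_or] at hne
    exact (takagiF_inv_sq_lt ht hne.1 hne.2).not_ge (htmax _ ⟨by norm_num, by norm_num⟩)
  · rintro (rfl | rfl)
    · exact ⟨⟨by norm_num, by norm_num⟩, hle⟩
    · exact ⟨⟨by norm_num, by norm_num⟩, h₁₃ ▸ hle⟩
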